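/- arXiv:1301.1452 — 5 statements merged into one kernel-verified Lean document; each statement's English description precedes it below -/
import Mathlib

section
/- Let F1 and F2 be finite fields with |F1 \ {0}| = m and |F2 \ {0}| = n. Then the independence number of the zero-divisor graph of the product ring F1 × F2 equals max{m, n}. -/
/-- The zero-divisor graph `Γ(R)`: vertices are the nonzero zero-divisors of `R`,
with distinct vertices `x`, `y` adjacent iff `x * y = 0`. -/
def zdvGraph (R : Type*) [CommRing R] :
    SimpleGraph {x : R // x ≠ 0 ∧ ∃ y ≠ 0, x * y = 0} where
  Adj x y := x ≠ y ∧ (x : R) * y = 0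
  symm := ⟨fun x y ⟨hxy, h⟩ => ⟨hxy.symm, by rwa [mul_comm]⟩⟩
  loopless := ⟨fun x ⟨h, _⟩ => h rfl⟩

/-- The independence number of a simple graph: the maximum cardinality of a set of
pairwise non-adjacent vertices. -/
noncomputable def indepNum {V : Type*} (G : SimpleGraph V) : ℕ :=
  sSup {n | ∃ s : Finset V, (s : Set V).Pairwise (fun a b => ¬ G.Adj a b) ∧ s.card = n}

/-!
For integral domains `R` and `S`, the nonzero zero-divisors of `R × S` are exactly the elements
`(a, 0)` and `(0, b)` with `a, b ≠ 0`, and two of them multiply to zero iff they lie on different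
axes. So `Γ(R × S)` is the complete bipartite graph on `R \ {0}` and `S \ {0}`, and an independent
set of a complete bipartite graph lies inside one of its two sides.
-/

open Finset

namespace SimpleGraph

variable {V W : Type*} {G : SimpleGraph V} {H : SimpleGraph W}

theorem IsNIndepSet.map {n : ℕ} {s : Finset V} (h : G.IsNIndepSet n s) (f : G ↪g H) :
    H.IsNIndepSet n (s.map f.toEmbedding) := by
  refine ⟨?_, by rw [card_map, h.card_eq]⟩
  rintro _ hx _ hy hxy hadj
  obtain ⟨x, hxs, rfl⟩ := mem_map.mp hx
  obtain ⟨y, hys, rfl⟩ := mem_map.mp hy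
  exact h.isIndepSet hxs hys (ne_of_apply_ne _ hxy) (f.map_adj_iff.mp hadj)

theorem Iso.indepNum_eq (e : G ≃g H) : G.indepNum = H.indepNum := by
  unfold SimpleGraph.indepNum
  congr 1
  ext n
  exact ⟨fun ⟨s, hs⟩ => ⟨_, hs.map e.toEmbedding⟩, fun ⟨t, ht⟩ => ⟨_, ht.map e.symm.toEmbedding⟩⟩

theorem IsIndepSet.forall_isLeft_or_forall_isRight {s : Set (V ⊕ W)}
    (h : (completeBipartiteGraph V W).IsIndepSet s) :
    (∀ x ∈ s, x.isLeft) ∨ (∀ x ∈ s, x.isRight) := by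
  by_contra! ⟨⟨x, hx, hxl⟩, ⟨y, hy, hyr⟩⟩
  simp only [Bool.not_eq_true, Sum.isLeft_eq_false, Sum.isRight_eq_false] at hxl hyr
  refine h hx hy ?_ (Or.inr ⟨hxl, hyr⟩)
  rintro rfl
  cases x <;> simp_all

theorem indepNum_completeBipartiteGraph [Finite V] [Finite W] :
    (completeBipartiteGraph V W).indepNum = max (Nat.card V) (Nat.card W) := by
  classical
  cases nonempty_fintype V
  cases nonempty_fintype W
  have hinl : (completeBipartiteGraph V W).IsIndepSet (univ.map .inl : Finset (V ⊕ W)) := by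
    simp [IsIndepSet, Set.Pairwise]
  have hinr : (completeBipartiteGraph V W).IsIndepSet (univ.map .inr : Finset (V ⊕ W)) := by
    simp [IsIndepSet, Set.Pairwise]
  obtain ⟨s, hs⟩ := (completeBipartiteGraph V W).exists_isNIndepSet_indepNum
  refine le_antisymm ?_ (max_le ?_ ?_)
  · rw [← hs.card_eq]
    rcases hs.isIndepSet.forall_isLeft_or_forall_isRight with h | h
    · refine le_max_of_le_left <|
        (card_le_card (t := univ.map .inl) fun x hx => ?_).trans (by simp)
      obtain ⟨a, rfl⟩ := Sum.isLeft_iff.mp (h x hx)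
      simp
    · refine le_max_of_le_right <|
        (card_le_card (t := univ.map .inr) fun x hx => ?_).trans (by simp)
      obtain ⟨b, rfl⟩ := Sum.isRight_iff.mp (h x hx)
      simp
  · simpa using hinl.card_le_indepNum
  · simpa using hinr.card_le_indepNum

end SimpleGraph

theorem indepNum_eq_simpleGraph_indepNum {V : Type*} (G : SimpleGraph V) :
    indepNum G = G.indepNum := by
  simp only [indepNum, SimpleGraph.indepNum, SimpleGraph.isNIndepSet_iff,
    SimpleGraph.isIndepSet_iff]

theorem Prod.fst_eq_zero_or_snd_eq_zero_of_mul_eq_zero {M₀ N₀ : Type*} [MulZeroClass M₀]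
    [MulZeroClass N₀] [NoZeroDivisors M₀] [NoZeroDivisors N₀] {x y : M₀ × N₀} (hy : y ≠ 0)
    (hxy : x * y = 0) : x.1 = 0 ∨ x.2 = 0 := by
  by_contra! ⟨h₁, h₂⟩
  obtain ⟨hxy₁, hxy₂⟩ := Prod.ext_iff.mp hxy
  exact hy <| Prod.ext ((mul_eq_zero.mp hxy₁).resolve_left h₁)
    ((mul_eq_zero.mp hxy₂).resolve_left h₂)

section Prod

variable (R S : Type*) [CommRing R] [CommRing S] [Nontrivial R] [Nontrivial S]

def zdvGraphProdVertex :
    {a : R // a ≠ 0} ⊕ {b : S // b ≠ 0} → {x : R × S // x ≠ 0 ∧ ∃ y ≠ 0, x * y = 0}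
  | .inl a => ⟨(a, 0), by simp [a.2], (0, 1), by simp, by simp⟩
  | .inr b => ⟨(0, b), by simp [b.2], (1, 0), by simp, by simp⟩

variable [NoZeroDivisors R] [NoZeroDivisors S]

theorem zdvGraphProdVertex_bijective : (zdvGraphProdVertex R S).Bijective := by
  refine ⟨?_, ?_⟩
  · rintro (⟨a, ha⟩ | ⟨b, hb⟩) (⟨a', ha'⟩ | ⟨b', hb'⟩) h <;>
      simp_all [zdvGraphProdVertex, Prod.ext_iff, eq_comm]
  · rintro ⟨⟨a, b⟩, hne, y, hy, hxy⟩
    rcases Prod.fst_eq_zero_or_snd_eq_zero_of_mul_eq_zero hy hxy with rfl | rfl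
    · exact ⟨.inr ⟨b, by simpa using hne⟩, rfl⟩
    · exact ⟨.inl ⟨a, by simpa using hne⟩, rfl⟩

noncomputable def zdvGraphProdIso :
    completeBipartiteGraph {a : R // a ≠ 0} {b : S // b ≠ 0} ≃g zdvGraph (R × S) where
  toEquiv := .ofBijective _ (zdvGraphProdVertex_bijective R S)
  map_rel_iff' := by
    rintro (⟨a, ha⟩ | ⟨b, hb⟩) (⟨a', ha'⟩ | ⟨b', hb'⟩) <;>
      simp [zdvGraph, zdvGraphProdVertex, Prod.ext_iff, *]

end Prod

theorem stmt0 (F₁ F₂ : Type*) [Field F₁] [Field F₂] [Finite F₁] [Finite F₂]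
    (m n : ℕ) (hm : Nat.card {x : F₁ // x ≠ 0} = m) (hn : Nat.card {x : F₂ // x ≠ 0} = n) :
    indepNum (zdvGraph (F₁ × F₂)) = max m n := by
  rw [indepNum_eq_simpleGraph_indepNum, ← (zdvGraphProdIso F₁ F₂).indepNum_eq,
    SimpleGraph.indepNum_completeBipartiteGraph, hm, hn]
end

section
/- For every natural number n ≥ 2, if the zero-divisor graph Γ(ℤ/nℤ) of the ring of integers modulo n is a Hamiltonian graph, then α(Γ(ℤ/nℤ)) = 1. -/
/-!
In a graph with a Hamiltonian cycle an independent set `S` has at most as many vertices as its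
complement: each vertex of `S` has two neighbours on the cycle, both outside `S`, and each vertex
outside `S` has only two cycle neighbours.

Let `p` be the least prime factor of `n`. If `n` has a second prime factor `r`, or if `n = p ^ A`
with `A ≥ 3` and `r = p ^ ⌈A / 2⌉`, then `r ∣ a * b` whenever `n ∣ a * b`, so the vertices of
`Γ(ℤ/nℤ)` not divisible by `r` are independent. They include the `n / p - n / lcm(p, r)` multiples
of `p` not divisible by `r`, while their complement consists of the `n / r - 1` nonzero multiples
of `r`, which is fewer; so `Γ(ℤ/nℤ)` is not Hamiltonian. In the remaining case `n ∣ p ^ 2`, all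
zero-divisors are multiples of `p` and `Γ(ℤ/nℤ)` is complete.
-/

open Finset

theorem SimpleGraph.Walk.IsHamiltonianCycle.card_le_card_compl_of_isIndepSet {V : Type*}
    [Fintype V] [DecidableEq V] {G : SimpleGraph V} {a : V} {c : G.Walk a a}
    (hc : c.IsHamiltonianCycle) {t : Finset V} (ht : G.IsIndepSet t) : #t ≤ #tᶜ := by
  classical
  have hdeg (v : V) : (c.toSubgraph.neighborSet v).ncard = 2 :=
    hc.isCycle.ncard_neighborSet_toSubgraph_eq_two (hc.mem_support v)
  have := card_mul_le_card_mul c.toSubgraph.Adj (s := t) (t := tᶜ) (m := 2) (n := 2)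
    (fun x hx => by
      rw [← hdeg x, ← Set.ncard_coe_finset]
      refine Set.ncard_le_ncard (fun y hy => ?_) (Set.toFinite _)
      have hxy : G.Adj x y := c.toSubgraph.adj_sub hy
      exact mem_coe.mpr <| (mem_bipartiteAbove _).mpr
        ⟨mem_compl.mpr fun hyt => ht hx hyt hxy.ne hxy, hy⟩)
    (fun y _ => by
      rw [← hdeg y, ← Set.ncard_coe_finset]
      refine Set.ncard_le_ncard (fun x hx => ?_) (Set.toFinite _)
      exact ((mem_bipartiteBelow _).mp hx).2.symm)
  omega

lemma indepNum_top {V : Type*} [Nonempty V] : indepNum (⊤ : SimpleGraph V) = 1 := by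
  obtain ⟨v⟩ := ‹Nonempty V›
  refine IsGreatest.csSup_eq ⟨⟨{v}, by simp, rfl⟩, ?_⟩
  rintro _ ⟨s, hs, rfl⟩
  exact card_le_one.mpr fun x hx y hy => by_contra fun hxy => hs hx hy hxy hxy

theorem Nat.Prime.pow_dvd_or_pow_dvd_of_pow_dvd_mul {p i j a b : ℕ} (hp : p.Prime)
    (h : p ^ (i + j + 1) ∣ a * b) : p ^ (i + 1) ∣ a ∨ p ^ (j + 1) ∣ b := by
  by_contra! hab
  have ha : a ≠ 0 := by rintro rfl; exact hab.1 (dvd_zero _)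
  have hb : b ≠ 0 := by rintro rfl; exact hab.2 (dvd_zero _)
  rw [hp.pow_dvd_iff_le_factorization ha, hp.pow_dvd_iff_le_factorization hb] at hab
  rw [hp.pow_dvd_iff_le_factorization (mul_ne_zero ha hb), Nat.factorization_mul ha hb,
    Finsupp.add_apply] at h
  omega

namespace ZMod

variable {n : ℕ} [NeZero n]

lemma mul_eq_zero_iff_dvd_val_mul (x y : ZMod n) : x * y = 0 ↔ n ∣ x.val * y.val := by
  rw [← natCast_eq_zero_iff, Nat.cast_mul, natCast_zmod_val, natCast_zmod_val]

lemma not_coprime_val_of_mul_eq_zero {x y : ZMod n} (hxy : x * y = 0) (hy : y ≠ 0) :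
    ¬ x.val.Coprime n := fun hcop =>
  hy <| ((isUnit_iff_coprime _ n).mpr hcop).mul_right_eq_zero.mp (by rwa [natCast_zmod_val])

lemma dvd_val_of_mul_eq_zero_of_eq_prime_pow {p A : ℕ} (hp : p.Prime) (hn : n = p ^ A)
    {x y : ZMod n} (hxy : x * y = 0) (hy : y ≠ 0) : p ∣ x.val := by
  by_contra hpx
  refine not_coprime_val_of_mul_eq_zero hxy hy ?_
  have hcop := Nat.Coprime.pow_left A ((hp.coprime_iff_not_dvd).mpr hpx)
  rw [← hn] at hcop
  exact hcop.symm

lemma exists_mul_eq_zero_of_dvd_val {p : ℕ} (hp : 1 < p) (hpn : p ∣ n) {x : ZMod n}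
    (hx : p ∣ x.val) : ∃ y ≠ 0, x * y = 0 := by
  have hn : 0 < n := Nat.pos_of_ne_zero (NeZero.ne n)
  have hlt : n / p < n := Nat.div_lt_self hn hp
  refine ⟨((n / p : ℕ) : ZMod n), fun h => ?_, ?_⟩
  · rw [natCast_eq_zero_iff] at h
    exact (Nat.div_pos (Nat.le_of_dvd hn hpn) (by omega)).ne'
      (Nat.eq_zero_of_dvd_of_lt h hlt)
  · rw [mul_eq_zero_iff_dvd_val_mul, val_cast_of_lt hlt]
    simpa only [Nat.mul_div_cancel' hpn] using Nat.mul_dvd_mul_right hx (n / p)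

lemma card_filter_dvd_val {d : ℕ} (hd : d ∣ n) : #{x : ZMod n | d ∣ x.val} = n / d := by
  obtain ⟨m, hm⟩ := hd
  have hd0 : 0 < d := Nat.pos_of_ne_zero fun h => NeZero.ne n (by simp [hm, h])
  have hval {k : ℕ} (hk : k ∈ (range m : Set ℕ)) : ((d * k : ℕ) : ZMod n).val = d * k :=
    val_cast_of_lt (hm ▸ Nat.mul_lt_mul_of_pos_left (mem_range.mp hk) hd0)
  rw [show n / d = m by rw [hm, Nat.mul_div_cancel_left m hd0], ← card_range m]
  refine card_nbij' (fun x => x.val / d) (fun k => ((d * k : ℕ) : ZMod n)) ?_ ?_ ?_ ?_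
  · exact fun x _ => mem_range.mpr (Nat.div_lt_of_lt_mul (hm ▸ val_lt x))
  · exact fun k hk => by
      rw [mem_coe, mem_filter, hval hk]
      exact ⟨mem_univ _, dvd_mul_right d k⟩
  · exact fun x hx => by simp [Nat.mul_div_cancel' (mem_filter.mp hx).2]
  · exact fun k hk => by simp only [hval hk, Nat.mul_div_cancel_left k hd0]

end ZMod

namespace zdvGraph

open ZMod

variable {n : ℕ} [NeZero n]

theorem div_add_one_le_of_isHamiltonianCycle {p r : ℕ} (hp : 1 < p) (hpn : p ∣ n)
    (hrn : r ∣ n) (hr : ∀ a b : ℕ, n ∣ a * b → r ∣ a ∨ r ∣ b) {u}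
    {c : (zdvGraph (ZMod n)).Walk u u} (hc : c.IsHamiltonianCycle) :
    n / p + 1 ≤ n / r + n / Nat.lcm p r := by
  set S : Finset {x : ZMod n // x ≠ 0 ∧ ∃ y ≠ 0, x * y = 0} := {v | ¬ r ∣ (v : ZMod n).val}
  have hS : (zdvGraph (ZMod n)).IsIndepSet S := by
    intro x hx y hy _ hxy
    simp only [S, coe_filter, mem_univ, true_and, Set.mem_ofPred_eq] at hx hy
    rcases hr _ _ ((mul_eq_zero_iff_dvd_val_mul _ _).mp hxy.2) with h | h
    exacts [hx h, hy h]
  have hS_lower : ({x | p ∣ x.val} : Finset (ZMod n)) \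
      ({x | Nat.lcm p r ∣ x.val} : Finset (ZMod n)) ⊆
      S.map (Function.Embedding.subtype _) := by
    intro x hx
    simp only [mem_sdiff, mem_filter, mem_univ, true_and, Nat.lcm_dvd_iff, not_and] at hx
    have hx0 : x ≠ 0 := by rintro rfl; exact hx.2 hx.1 (by simp)
    exact mem_map.mpr ⟨⟨x, hx0, exists_mul_eq_zero_of_dvd_val hp hpn hx.1⟩,
      by simpa [S] using hx.2 hx.1, rfl⟩
  have hS_upper :
      Sᶜ.map (Function.Embedding.subtype _) ⊆ ({x | r ∣ x.val} : Finset (ZMod n)).erase 0 := by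
    intro x hx
    obtain ⟨v, hv, rfl⟩ := mem_map.mp hx
    simpa [S, v.2.1] using hv
  have hlcm := card_sdiff_add_card_eq_card (s := {x : ZMod n | Nat.lcm p r ∣ x.val})
    (t := {x | p ∣ x.val}) (monotone_filter_right _ fun _ _ h => (Nat.dvd_lcm_left p r).trans h)
  have hzero := card_erase_add_one (s := {x : ZMod n | r ∣ x.val}) (a := 0) (by simp)
  rw [card_filter_dvd_val (Nat.lcm_dvd hpn hrn), card_filter_dvd_val hpn] at hlcm
  rw [card_filter_dvd_val hrn] at hzero
  have hlower := (card_le_card hS_lower).trans_eq (card_map _)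
  have hupper := (card_map _).symm.trans_le (card_le_card hS_upper)
  have hham := hc.card_le_card_compl_of_isIndepSet hS
  omega

theorem not_isHamiltonianCycle_of_prime_dvd_of_prime_dvd {p s : ℕ} (hp : p.Prime) (hs : s.Prime)
    (hps : p < s) (hpn : p ∣ n) (hsn : s ∣ n) {u} (c : (zdvGraph (ZMod n)).Walk u u) :
    ¬ c.IsHamiltonianCycle := fun hc => by
  have hcop : p.Coprime s := (Nat.coprime_primes hp hs).mpr hps.ne
  have key := div_add_one_le_of_isHamiltonianCycle hp.one_lt hpn hsn
    (fun a b h => hs.dvd_mul.mp (hsn.trans h)) hc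
  obtain ⟨t, ht⟩ := hcop.mul_dvd_of_dvd_of_dvd hpn hsn
  rw [hcop.lcm_eq_mul, Nat.div_eq_of_eq_mul_right hp.pos (k := s * t) (by rw [ht, mul_assoc]),
    Nat.div_eq_of_eq_mul_right hs.pos (k := p * t) (by rw [ht]; ring),
    Nat.div_eq_of_eq_mul_right (mul_pos hp.pos hs.pos) ht] at key
  nlinarith

theorem not_isHamiltonianCycle_of_eq_prime_pow {p A : ℕ} (hp : p.Prime) (hA : 3 ≤ A)
    (hn : n = p ^ A) {u} (c : (zdvGraph (ZMod n)).Walk u u) : ¬ c.IsHamiltonianCycle := fun hc => by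
  set i := (A - 1) / 2
  have key := div_add_one_le_of_isHamiltonianCycle (r := p ^ (i + 1)) hp.one_lt
    (hn ▸ dvd_pow_self p (by omega)) (hn ▸ pow_dvd_pow p (by omega))
    (fun a b h => hp.pow_dvd_or_pow_dvd_of_pow_dvd_mul ((pow_dvd_pow p (by omega)).trans (hn ▸ h)))
    hc
  rw [Nat.lcm_eq_right (dvd_pow_self p (by omega)), hn, Nat.pow_div (by omega) hp.pos,
    Nat.div_eq_of_eq_mul_left hp.pos (k := p ^ (A - 1)) (by rw [← pow_succ]; congr 1; omega)] at key
  have hsplit : p ^ (A - 1) = p ^ (A - (i + 1)) * p ^ i := by rw [← pow_add]; congr 1; omega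
  have hpi : 2 ≤ p ^ i := hp.two_le.trans (Nat.le_self_pow (by omega) p)
  nlinarith [Nat.mul_le_mul_left (p ^ (A - (i + 1))) hpi]

theorem zmod_eq_top_of_isHamiltonian (H : (zdvGraph (ZMod n)).IsHamiltonian) :
    zdvGraph (ZMod n) = ⊤ := by
  ext v w
  refine ⟨fun h => h.1, fun hvw => ⟨hvw, ?_⟩⟩
  have : Nontrivial {x : ZMod n // x ≠ 0 ∧ ∃ y ≠ 0, x * y = 0} := ⟨v, w, hvw⟩
  obtain ⟨u, c, hc⟩ := H Fintype.one_lt_card.ne'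
  have hn1 : n ≠ 1 := by rintro rfl; exact v.2.1 (Subsingleton.elim _ _)
  have hp := Nat.minFac_prime hn1
  by_cases hsecond : ∃ s, s.Prime ∧ s ∣ n ∧ s ≠ n.minFac
  · obtain ⟨s, hs, hsn, hsp⟩ := hsecond
    exact absurd hc <| not_isHamiltonianCycle_of_prime_dvd_of_prime_dvd hp hs
      ((Nat.minFac_le_of_dvd hs.two_le hsn).lt_of_ne hsp.symm) (Nat.minFac_dvd n) hsn c
  push Not at hsecond
  have hn := Nat.eq_prime_pow_of_unique_prime_dvd (NeZero.ne n) fun hd hdn => hsecond _ hd hdn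
  rcases le_or_gt n.primeFactorsList.length 2 with hA | hA
  · obtain ⟨y, hy, hvy⟩ := v.2.2
    obtain ⟨z, hz, hwz⟩ := w.2.2
    rw [mul_eq_zero_iff_dvd_val_mul]
    calc n ∣ n.minFac ^ 2 := (dvd_of_eq hn).trans (pow_dvd_pow _ hA)
      _ = n.minFac * n.minFac := sq _
      _ ∣ _ := Nat.mul_dvd_mul (dvd_val_of_mul_eq_zero_of_eq_prime_pow hp hn hvy hy)
        (dvd_val_of_mul_eq_zero_of_eq_prime_pow hp hn hwz hz)
  · exact absurd hc (not_isHamiltonianCycle_of_eq_prime_pow hp hA hn c)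

end zdvGraph

theorem stmt7 (n : ℕ) (hn : 2 ≤ n) :
    letI : NeZero n := ⟨by omega⟩
    (zdvGraph (ZMod n)).IsHamiltonian → indepNum (zdvGraph (ZMod n)) = 1 := by
  have : NeZero n := ⟨by omega⟩
  intro H
  have := H.connected.nonempty
  rw [zdvGraph.zmod_eq_top_of_isHamiltonian H]
  exact indepNum_top
end

section
/- Let F1, F2, F3 be finite fields with |F_i \ {0}| = n_i for i = 1, 2, 3, where n1 ≥ n2 ≥ n3. If R = F1 × F2 × F3, then α(Γ(R)) = n1·n2 + n1·n3 + max{n1, n2·n3}. -/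
/-!
The nonzero zero-divisors of `F₁ × F₂ × F₃` are the nonzero elements with a zero coordinate;
sorting them by support (a nonempty proper subset of `{1, 2, 3}`), two of them are adjacent
exactly when their supports are disjoint. The six supports form three complementary pairs
`{i}`, `{j, k}`, and every element of one class of a pair is adjacent to every element of the
other, so an independent set meets the two classes of a pair in at most `max nᵢ (nⱼ * nₖ)`
elements. Under `n₁ ≥ n₂ ≥ n₃ ≥ 1` the sum of these three bounds is
`n₁ n₂ + n₁ n₃ + max n₁ (n₂ n₃)`. It is attained by the non-units with nonzero first coordinate
when `n₂ n₃ ≤ n₁`, and by the elements with exactly two nonzero coordinates otherwise.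
-/

open Finset

section ZeroDivisorGraph

variable {R : Type*} [CommRing R]

theorem zdvGraph_isIndepSet_iff {s : Finset {x : R // x ≠ 0 ∧ ∃ y ≠ 0, x * y = 0}} :
    (zdvGraph R).IsIndepSet (s : Set _) ↔
      (s.map (Function.Embedding.subtype _) : Set R).Pairwise fun x y => x * y ≠ 0 := by
  simp [SimpleGraph.IsIndepSet, Set.Pairwise, zdvGraph, Subtype.ext_iff]

theorem card_le_indepNum_zdvGraph [Finite R] {t : Finset R}
    (hvert : ∀ x ∈ t, x ≠ 0 ∧ ∃ y ≠ 0, x * y = 0)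
    (ht : (t : Set R).Pairwise fun x y => x * y ≠ 0) :
    #t ≤ indepNum (zdvGraph R) := by
  classical
  rw [indepNum_eq_simpleGraph_indepNum]
  have hs := (zdvGraph_isIndepSet_iff (s := t.subtype _)).2 (by rwa [subtype_map_of_mem hvert])
  simpa [card_subtype, filter_true_of_mem hvert] using hs.card_le_indepNum

theorem indepNum_zdvGraph_le [Finite R] {m : ℕ}
    (h : ∀ t : Finset R, (∀ x ∈ t, x ≠ 0 ∧ ∃ y ≠ 0, x * y = 0) →
      (t : Set R).Pairwise (fun x y => x * y ≠ 0) → #t ≤ m) :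
    indepNum (zdvGraph R) ≤ m := by
  rw [indepNum_eq_simpleGraph_indepNum]
  obtain ⟨s, hs, hcard⟩ := (zdvGraph R).exists_isNIndepSet_indepNum
  rw [← hcard, ← card_map (Function.Embedding.subtype _)]
  refine h _ (fun x hx => ?_) (zdvGraph_isIndepSet_iff.1 hs)
  obtain ⟨v, -, rfl⟩ := mem_map.1 hx
  exact v.2

end ZeroDivisorGraph

theorem card_inter_union_le_max {M : Type*} [MulZeroClass M] [DecidableEq M] {t A B : Finset M}
    (ht : (t : Set M).Pairwise fun x y => x * y ≠ 0) (hAB : ∀ a ∈ A, ∀ b ∈ B, a * b = 0) :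
    #(t ∩ (A ∪ B)) ≤ max #A #B := by
  by_cases hA : ∃ a ∈ t, a ∈ A
  · obtain ⟨a, hat, haA⟩ := hA
    refine (card_le_card fun x hx => ?_).trans (le_max_left _ _)
    obtain ⟨hxt, hxA | hxB⟩ := by simpa only [mem_inter, mem_union] using hx
    · exact hxA
    · by_cases hax : a = x
      · exact hax ▸ haA
      · exact absurd (hAB a haA x hxB) (ht hat hxt hax)
  · refine (card_le_card fun x hx => ?_).trans (le_max_right _ _)
    obtain ⟨hxt, hxA | hxB⟩ := by simpa only [mem_inter, mem_union] using hx
    · exact absurd ⟨x, hxt, hxA⟩ hA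
    · exact hxB

theorem card_compl_singleton_zero {F : Type*} [Zero F] [Fintype F] [DecidableEq F] :
    #({0}ᶜ : Finset F) = Nat.card {x : F // x ≠ 0} := by
  simp [Nat.card_eq_fintype_card, Fintype.card_subtype, filter_ne', card_compl]

theorem card_eq_natCard_ne_zero_add_one {F : Type*} [Zero F] [Fintype F] :
    Fintype.card F = Nat.card {x : F // x ≠ 0} + 1 := by
  classical
  rw [← card_compl_singleton_zero, ← card_singleton (0 : F), card_compl_add_card]

section TripleProduct

variable {F₁ F₂ F₃ : Type*} [CommRing F₁] [CommRing F₂] [CommRing F₃]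
  [IsDomain F₁] [IsDomain F₂] [IsDomain F₃]

theorem prod₃_exists_ne_zero_mul_eq_zero_iff (x : F₁ × F₂ × F₃) :
    (∃ y ≠ 0, x * y = 0) ↔ x.1 = 0 ∨ x.2.1 = 0 ∨ x.2.2 = 0 := by
  constructor
  · rintro ⟨y, hy, hxy⟩
    contrapose! hy
    simp_all [Prod.ext_iff]
  · rintro (h | h | h)
    · exact ⟨(1, 0, 0), by simp [Prod.ext_iff], by simp [Prod.ext_iff, h]⟩
    · exact ⟨(0, 1, 0), by simp [Prod.ext_iff], by simp [Prod.ext_iff, h]⟩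
    · exact ⟨(0, 0, 1), by simp [Prod.ext_iff], by simp [Prod.ext_iff, h]⟩

variable [Finite F₁] [Finite F₂] [Finite F₃] {n₁ n₂ n₃ : ℕ}

theorem card_le_of_pairwise_mul_ne_zero (h₁ : Nat.card {x : F₁ // x ≠ 0} = n₁)
    (h₂ : Nat.card {x : F₂ // x ≠ 0} = n₂) (h₃ : Nat.card {x : F₃ // x ≠ 0} = n₃)
    {t : Finset (F₁ × F₂ × F₃)}
    (hvert : ∀ x ∈ t, x ≠ 0 ∧ ∃ y ≠ 0, x * y = 0)
    (ht : (t : Set (F₁ × F₂ × F₃)).Pairwise fun x y => x * y ≠ 0) :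
    #t ≤ max n₁ (n₂ * n₃) + max n₂ (n₁ * n₃) + max n₃ (n₁ * n₂) := by
  classical
  have := Fintype.ofFinite F₁; have := Fintype.ofFinite F₂; have := Fintype.ofFinite F₃
  set A₁ : Finset (F₁ × F₂ × F₃) := {0}ᶜ ×ˢ {0} ×ˢ {0}
  set B₁ : Finset (F₁ × F₂ × F₃) := {0} ×ˢ {0}ᶜ ×ˢ {0}ᶜ
  set A₂ : Finset (F₁ × F₂ × F₃) := {0} ×ˢ {0}ᶜ ×ˢ {0}
  set B₂ : Finset (F₁ × F₂ × F₃) := {0}ᶜ ×ˢ {0} ×ˢ {0}ᶜ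
  set A₃ : Finset (F₁ × F₂ × F₃) := {0} ×ˢ {0} ×ˢ {0}ᶜ
  set B₃ : Finset (F₁ × F₂ × F₃) := {0}ᶜ ×ˢ {0}ᶜ ×ˢ {0}
  have hcover : t ⊆ (A₁ ∪ B₁) ∪ (A₂ ∪ B₂) ∪ (A₃ ∪ B₃) := by
    intro x hx
    obtain ⟨hx0, hzero⟩ := hvert x hx
    rw [prod₃_exists_ne_zero_mul_eq_zero_iff] at hzero
    have hx0' : ¬(x.1 = 0 ∧ x.2.1 = 0 ∧ x.2.2 = 0) := fun h =>
      hx0 (Prod.ext h.1 (Prod.ext h.2.1 h.2.2))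
    simp only [A₁, B₁, A₂, B₂, A₃, B₃, mem_union, mem_product, mem_compl, mem_singleton]
    by_cases e₁ : x.1 = 0 <;> by_cases e₂ : x.2.1 = 0 <;> by_cases e₃ : x.2.2 = 0 <;>
      simp [e₁, e₂, e₃] at hx0' hzero ⊢
  calc #t ≤ #(t ∩ (A₁ ∪ B₁) ∪ t ∩ (A₂ ∪ B₂) ∪ t ∩ (A₃ ∪ B₃)) := by
        rw [← inter_union_distrib_left, ← inter_union_distrib_left, inter_eq_left.2 hcover]
    _ ≤ #(t ∩ (A₁ ∪ B₁)) + #(t ∩ (A₂ ∪ B₂)) + #(t ∩ (A₃ ∪ B₃)) :=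
        (card_union_le _ _).trans (by gcongr; exact card_union_le _ _)
    _ ≤ max #A₁ #B₁ + max #A₂ #B₂ + max #A₃ #B₃ := by
        gcongr <;> refine card_inter_union_le_max ht fun a ha b hb => ?_ <;>
          simp only [A₁, B₁, A₂, B₂, A₃, B₃, mem_product, mem_compl, mem_singleton] at ha hb <;>
          simp [Prod.ext_iff, ha, hb]
    _ = max n₁ (n₂ * n₃) + max n₂ (n₁ * n₃) + max n₃ (n₁ * n₂) := by
        simp only [A₁, B₁, A₂, B₂, A₃, B₃, card_product, card_singleton, card_compl_singleton_zero,
          h₁, h₂, h₃, mul_one, one_mul]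

theorem exists_pairwise_mul_ne_zero_card_eq_of_fst_ne_zero
    (h₁ : Nat.card {x : F₁ // x ≠ 0} = n₁)
    (h₂ : Nat.card {x : F₂ // x ≠ 0} = n₂) (h₃ : Nat.card {x : F₃ // x ≠ 0} = n₃) :
    ∃ t : Finset (F₁ × F₂ × F₃), (∀ x ∈ t, x ≠ 0 ∧ ∃ y ≠ 0, x * y = 0) ∧
      (t : Set (F₁ × F₂ × F₃)).Pairwise (fun x y => x * y ≠ 0) ∧ #t = n₁ * (n₂ + n₃ + 1) := by
  classical
  have := Fintype.ofFinite F₁; have := Fintype.ofFinite F₂; have := Fintype.ofFinite F₃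
  refine ⟨{0}ᶜ ×ˢ ({0}ᶜ ×ˢ {0}ᶜ : Finset (F₂ × F₃))ᶜ, fun x hx => ?_,
    fun x hx y hy _ hxy => ?_, ?_⟩
  · simp only [mem_product, mem_compl, mem_singleton, not_and_or, not_not] at hx
    refine ⟨fun h => hx.1 (by simp [h]), ?_⟩
    rw [prod₃_exists_ne_zero_mul_eq_zero_iff]
    exact .inr hx.2
  · simp only [coe_product, coe_compl, coe_singleton, Set.mem_prod, Set.mem_compl_iff,
      Set.mem_singleton_iff] at hx hy
    exact mul_ne_zero hx.1 hy.1 (congrArg Prod.fst hxy)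
  · rw [card_product, card_compl_singleton_zero, card_compl, card_product,
      card_compl_singleton_zero, card_compl_singleton_zero, Fintype.card_prod,
      card_eq_natCard_ne_zero_add_one, card_eq_natCard_ne_zero_add_one, h₁, h₂, h₃]
    exact congrArg (n₁ * ·) (Nat.sub_eq_of_eq_add (by ring))

theorem exists_pairwise_mul_ne_zero_card_eq_of_two_ne_zero
    (h₁ : Nat.card {x : F₁ // x ≠ 0} = n₁)
    (h₂ : Nat.card {x : F₂ // x ≠ 0} = n₂) (h₃ : Nat.card {x : F₃ // x ≠ 0} = n₃) :
    ∃ t : Finset (F₁ × F₂ × F₃), (∀ x ∈ t, x ≠ 0 ∧ ∃ y ≠ 0, x * y = 0) ∧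
      (t : Set (F₁ × F₂ × F₃)).Pairwise (fun x y => x * y ≠ 0) ∧
      #t = n₂ * n₃ + n₁ * n₃ + n₁ * n₂ := by
  classical
  have := Fintype.ofFinite F₁; have := Fintype.ofFinite F₂; have := Fintype.ofFinite F₃
  refine ⟨{0} ×ˢ {0}ᶜ ×ˢ {0}ᶜ ∪ {0}ᶜ ×ˢ {0} ×ˢ {0}ᶜ ∪ {0}ᶜ ×ˢ {0}ᶜ ×ˢ {0},
    fun x hx => ?_, fun x hx y hy _ => ?_, ?_⟩
  · simp only [mem_union, mem_product, mem_compl, mem_singleton] at hx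
    rw [prod₃_exists_ne_zero_mul_eq_zero_iff]
    refine ⟨fun h => ?_, by tauto⟩
    simp only [h, Prod.fst_zero, Prod.snd_zero] at hx
    tauto
  · simp only [coe_union, coe_product, coe_compl, coe_singleton, Set.mem_union, Set.mem_prod,
      Set.mem_compl_iff, Set.mem_singleton_iff] at hx hy
    rcases hx with (hx | hx) | hx <;> rcases hy with (hy | hy) | hy <;> simp [Prod.ext_iff, hx, hy]
  · rw [card_union_of_disjoint, card_union_of_disjoint]
    · simp only [card_product, card_singleton, card_compl_singleton_zero, h₁, h₂, h₃, one_mul,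
        mul_one]
    all_goals simp only [disjoint_union_left, disjoint_product, disjoint_compl_left,
      disjoint_compl_right, true_or, or_true, and_self]

end TripleProduct

theorem stmt9 (F₁ F₂ F₃ : Type*) [Field F₁] [Field F₂] [Field F₃]
    [Finite F₁] [Finite F₂] [Finite F₃] (n₁ n₂ n₃ : ℕ)
    (h₁ : Nat.card {x : F₁ // x ≠ 0} = n₁) (h₂ : Nat.card {x : F₂ // x ≠ 0} = n₂)
    (h₃ : Nat.card {x : F₃ // x ≠ 0} = n₃)
    (h12 : n₂ ≤ n₁) (h23 : n₃ ≤ n₂) :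
    indepNum (zdvGraph (F₁ × F₂ × F₃)) = n₁ * n₂ + n₁ * n₃ + max n₁ (n₂ * n₃) := by
  have hn₃ : 0 < n₃ := h₃ ▸ Nat.card_pos_iff.2 ⟨⟨⟨1, one_ne_zero⟩⟩, inferInstance⟩
  have hn₁ : 0 < n₁ := hn₃.trans_le (h23.trans h12)
  apply le_antisymm
  · refine indepNum_zdvGraph_le fun t hvert ht =>
      (card_le_of_pairwise_mul_ne_zero h₁ h₂ h₃ hvert ht).trans_eq ?_
    rw [max_eq_right (h12.trans (Nat.le_mul_of_pos_right n₁ hn₃)),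
      max_eq_right (h23.trans (Nat.le_mul_of_pos_left n₂ hn₁))]
    ring
  · rcases le_total n₁ (n₂ * n₃) with h | h
    · obtain ⟨t, hvert, ht, hcard⟩ := exists_pairwise_mul_ne_zero_card_eq_of_two_ne_zero h₁ h₂ h₃
      calc _ = #t := by rw [hcard, max_eq_right h]; ring
        _ ≤ _ := card_le_indepNum_zdvGraph hvert ht
    · obtain ⟨t, hvert, ht, hcard⟩ := exists_pairwise_mul_ne_zero_card_eq_of_fst_ne_zero h₁ h₂ h₃
      calc _ = #t := by rw [hcard, max_eq_left h]; ring
        _ ≤ _ := card_le_indepNum_zdvGraph hvert ht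
end

section
/- Let F1, F2, F3, F4 be finite fields with |F_i \ {0}| = n_i for i = 1, 2, 3, 4, where n1 ≥ n2 ≥ n3 ≥ n4, and let R = F1 × F2 × F3 × F4. If n1 ≥ n2·n3·n4, then α(Γ(R)) = n1·(n2n3 + n2n4 + n3n4 + n2 + n3 + n4 + 1). -/
/-!
Classify the elements of `F₁ × F₂ × F₃ × F₄` by their support pattern in `Bool⁴`. Vertices with
complementary patterns multiply to zero, so an independent set meets at most one class of each
complementary pair. Pairing the class `(true, t)` with `(false, tᶜ)`, and using that
`n₂ n₃ n₄ ≤ n₁` makes every class with nonzero first coordinate at least as large as every class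
with first coordinate zero, an independent set is no larger than the set of vertices with nonzero
first coordinate, which is itself independent and has `n₁ ((n₂+1)(n₃+1)(n₄+1) - n₂ n₃ n₄)`
elements.
-/

open Finset

theorem indepNum_eq_of_isIndepSet {V : Type*} {G : SimpleGraph V} {N : ℕ}
    (hN : ∃ s : Finset V, G.IsIndepSet s ∧ #s = N)
    (hle : ∀ s : Finset V, G.IsIndepSet s → #s ≤ N) :
    indepNum G = N := by
  refine IsGreatest.csSup_eq ⟨hN, ?_⟩
  rintro _ ⟨s, hs, rfl⟩
  exact hle s hs

theorem SimpleGraph.IsIndepSet.card_filter_add_card_filter_le_max {V : Type*} [Fintype V]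
    {G : SimpleGraph V} {s : Finset V} (hs : G.IsIndepSet s) {p q : V → Prop}
    [DecidablePred p] [DecidablePred q] (hadj : ∀ u v, p u → q v → G.Adj u v) :
    #{v ∈ s | p v} + #{v ∈ s | q v} ≤ max #{v | p v} #{v | q v} := by
  rcases eq_empty_or_nonempty {v ∈ s | q v} with hq | ⟨v, hv⟩
  · rw [hq, card_empty, add_zero]
    exact le_max_of_le_left (card_le_card (filter_subset_filter _ (subset_univ s)))
  · have hp : {u ∈ s | p u} = ∅ := by
      refine filter_eq_empty_iff.2 fun u hu hpu => ?_
      rw [mem_filter] at hv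
      have huv := hadj u v hpu hv.2
      exact hs hu hv.1 (G.ne_of_adj huv) huv
    rw [hp, card_empty, zero_add]
    exact le_max_of_le_right (card_le_card (filter_subset_filter _ (subset_univ s)))

theorem Finset.card_eq_sum_card_filter_add_card_filter {W β : Type*} [Fintype β]
    [DecidableEq β] (s : Finset W) (f : W → Bool × β) {σ : β → β} (hσ : σ.Involutive) :
    #s = ∑ t, (#{x ∈ s | f x = (true, t)} + #{x ∈ s | f x = (false, σ t)}) := by
  rw [card_eq_sum_card_fiberwise (f := f) (t := univ) fun _ _ => mem_coe.2 (mem_univ _),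
    Fintype.sum_prod_type, Fintype.sum_bool, sum_add_distrib]
  exact congrArg _ (Fintype.sum_bijective σ hσ.bijective _ _ fun _ => rfl).symm

theorem Nat.card_prodMap_fiber {α β γ δ : Type*} (f : α → γ) (g : β → δ) (c : γ × δ) :
    Nat.card {x // Prod.map f g x = c} =
      Nat.card {a // f a = c.1} * Nat.card {b // g b = c.2} := by
  rw [← Nat.card_prod]
  exact Nat.card_congr <| (Equiv.subtypeEquivRight fun _ => Prod.ext_iff).trans
    (@Equiv.subtypeProdEquivProd α β (f · = c.1) (g · = c.2))

theorem Nat.card_decide_ne_zero_eq {M : Type*} [Zero M] [DecidableEq M] (c : Bool) :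
    Nat.card {a : M // decide (a ≠ 0) = c} = cond c (Nat.card {a : M // a ≠ 0}) 1 := by
  cases c
  · simp only [decide_eq_false_iff_not, not_not, cond_false]
    exact Nat.card_unique
  · simp only [decide_eq_true_eq, cond_true]

theorem one_le_card_ne_zero {M : Type*} [MulZeroOneClass M] [Nontrivial M] [Finite M] :
    1 ≤ Nat.card {a : M // a ≠ 0} :=
  have : Nonempty {a : M // a ≠ 0} := ⟨⟨1, one_ne_zero⟩⟩
  Nat.card_pos

namespace FourFieldProduct

variable {F₁ F₂ F₃ F₄ : Type*} [Field F₁] [Field F₂] [Field F₃] [Field F₄]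
  [DecidableEq F₁] [DecidableEq F₂] [DecidableEq F₃] [DecidableEq F₄]

local notation "n₁" => Nat.card {a : F₁ // a ≠ 0}
local notation "n₂" => Nat.card {a : F₂ // a ≠ 0}
local notation "n₃" => Nat.card {a : F₃ // a ≠ 0}
local notation "n₄" => Nat.card {a : F₄ // a ≠ 0}

def supportPattern : F₁ × F₂ × F₃ × F₄ → Bool × Bool × Bool × Bool :=
  Prod.map (· ≠ 0) (Prod.map (· ≠ 0) (Prod.map (· ≠ 0) (· ≠ 0)))

theorem supportPattern_apply (x : F₁ × F₂ × F₃ × F₄) :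
    supportPattern x =
      (decide (x.1 ≠ 0), decide (x.2.1 ≠ 0), decide (x.2.2.1 ≠ 0), decide (x.2.2.2 ≠ 0)) :=
  rfl

theorem card_supportPattern_eq (b : Bool × Bool × Bool × Bool) :
    Nat.card {x : F₁ × F₂ × F₃ × F₄ // supportPattern x = b} =
      cond b.1 n₁ 1 * (cond b.2.1 n₂ 1 * (cond b.2.2.1 n₃ 1 * cond b.2.2.2 n₄ 1)) := by
  simp only [supportPattern, Nat.card_prodMap_fiber, Nat.card_decide_ne_zero_eq]

theorem supportPattern_eq_zero_iff (x : F₁ × F₂ × F₃ × F₄) :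
    supportPattern x = (false, false, false, false) ↔ x = 0 := by
  simp [supportPattern_apply, Prod.ext_iff]

theorem exists_ne_zero_mul_eq_zero_iff (x : F₁ × F₂ × F₃ × F₄) :
    (∃ y ≠ 0, x * y = 0) ↔ supportPattern x ≠ (true, true, true, true) := by
  constructor
  · rintro ⟨y, hy, hxy⟩ hx
    simp only [supportPattern_apply, Prod.ext_iff, decide_eq_true_eq, Prod.fst_mul,
      Prod.snd_mul, Prod.fst_zero, Prod.snd_zero, mul_eq_zero] at hx hxy
    exact hy (by ext <;> simp_all)
  · intro hx
    refine ⟨(if x.1 = 0 then 1 else 0, if x.2.1 = 0 then 1 else 0, if x.2.2.1 = 0 then 1 else 0,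
      if x.2.2.2 = 0 then 1 else 0), ?_, ?_⟩
    · simpa [supportPattern, Prod.ext_iff] using hx
    · ext <;> simp

theorem mul_eq_zero_of_supportPattern_eq_compl {x y : F₁ × F₂ × F₃ × F₄}
    {t : Bool × Bool × Bool} (hx : supportPattern x = (true, t))
    (hy : supportPattern y = (false, tᶜ)) : x * y = 0 := by
  obtain ⟨t₁, t₂, t₃⟩ := t
  change _ = (false, !t₁, !t₂, !t₃) at hy
  simp only [supportPattern_apply, Prod.ext_iff] at hx hy
  ext <;> cases t₁ <;> cases t₂ <;> cases t₃ <;> simp_all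

theorem card_supportPattern_false_le_true [Finite F₂] [Finite F₃] [Finite F₄]
    (hbig : n₂ * n₃ * n₄ ≤ n₁) (u t : Bool × Bool × Bool) :
    Nat.card {x : F₁ × F₂ × F₃ × F₄ // supportPattern x = (false, u)} ≤
      Nat.card {x : F₁ × F₂ × F₃ × F₄ // supportPattern x = (true, t)} := by
  have cond_le {n : ℕ} (hn : 1 ≤ n) (c : Bool) : cond c n 1 ≤ n := by cases c <;> simp [hn]
  have one_le_cond {n : ℕ} (hn : 1 ≤ n) (c : Bool) : 1 ≤ cond c n 1 := by cases c <;> simp [hn]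
  simp only [card_supportPattern_eq, cond_false, cond_true, one_mul]
  calc _ ≤ n₂ * (n₃ * n₄) := by gcongr <;> exact cond_le one_le_card_ne_zero _
    _ ≤ n₁ := by rwa [← mul_assoc]
    _ ≤ _ := Nat.le_mul_of_pos_right _ <| Nat.mul_pos (one_le_cond one_le_card_ne_zero _) <|
        Nat.mul_pos (one_le_cond one_le_card_ne_zero _) (one_le_cond one_le_card_ne_zero _)

local notation "Z*" => {x : F₁ × F₂ × F₃ × F₄ // x ≠ 0 ∧ ∃ y ≠ 0, x * y = 0}

theorem zdvGraph_adj_of_supportPattern_eq_compl {u v : Z*} {t : Bool × Bool × Bool}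
    (hu : supportPattern u.1 = (true, t)) (hv : supportPattern v.1 = (false, tᶜ)) :
    (zdvGraph _).Adj u v :=
  ⟨fun h => by simp [h, hv] at hu, mul_eq_zero_of_supportPattern_eq_compl hu hv⟩

theorem supportPattern_ne_of_mem_zdv (v : Z*) :
    supportPattern v.1 ≠ (false, false, false, false) ∧
      supportPattern v.1 ≠ (true, true, true, true) :=
  ⟨mt (supportPattern_eq_zero_iff _).1 v.2.1, (exists_ne_zero_mul_eq_zero_iff _).1 v.2.2⟩

variable [Fintype F₁] [Fintype F₂] [Fintype F₃] [Fintype F₄]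

theorem card_filter_supportPattern_eq {b : Bool × Bool × Bool × Bool}
    (hb₀ : b ≠ (false, false, false, false)) (hb₁ : b ≠ (true, true, true, true)) :
    #{v : Z* | supportPattern v.1 = b} =
      Nat.card {x : F₁ × F₂ × F₃ × F₄ // supportPattern x = b} := by
  rw [← Fintype.card_subtype, ← Nat.card_eq_fintype_card]
  refine Nat.card_congr <|
    @Equiv.subtypeSubtypeEquivSubtype _ _ (supportPattern · = b) fun {x} hx => ⟨?_, ?_⟩
  · rwa [ne_eq, ← supportPattern_eq_zero_iff, hx]
  · rwa [exists_ne_zero_mul_eq_zero_iff, hx]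

theorem filter_supportPattern_all_true_eq_empty :
    ({v : Z* | supportPattern v.1 = (true, true, true, true)} : Finset Z*) = ∅ :=
  filter_eq_empty_iff.2 fun v _ => (supportPattern_ne_of_mem_zdv v).2

theorem card_filter_supportPattern_false_le_true (hbig : n₂ * n₃ * n₄ ≤ n₁)
    (t : Bool × Bool × Bool) :
    #{v : Z* | supportPattern v.1 = (false, tᶜ)} ≤ #{v : Z* | supportPattern v.1 = (true, t)} := by
  by_cases ht : t = ⊤
  · subst ht
    exact (card_eq_zero.2 <| filter_eq_empty_iff.2 fun v _ =>
      (supportPattern_ne_of_mem_zdv v).1).trans_le (Nat.zero_le _)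
  · rw [card_filter_supportPattern_eq (fun h => ht (compl_eq_bot.1 (Prod.ext_iff.1 h).2))
        (by simp), card_filter_supportPattern_eq (by simp) fun h => ht (Prod.ext_iff.1 h).2]
    exact card_supportPattern_false_le_true hbig _ _

theorem card_le_of_isIndepSet (hbig : n₂ * n₃ * n₄ ≤ n₁) {s : Finset Z*}
    (hs : (zdvGraph (F₁ × F₂ × F₃ × F₄)).IsIndepSet ↑s) :
    #s ≤ ∑ t, #{v : Z* | supportPattern v.1 = (true, t)} := by
  rw [card_eq_sum_card_filter_add_card_filter s (supportPattern ·.1) compl_involutive]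
  gcongr with t
  refine (hs.card_filter_add_card_filter_le_max fun u v hu hv => ?_).trans (max_le le_rfl ?_)
  · exact zdvGraph_adj_of_supportPattern_eq_compl hu hv
  · exact card_filter_supportPattern_false_le_true hbig t

theorem exists_isIndepSet_card_eq :
    ∃ s : Finset Z*, (zdvGraph (F₁ × F₂ × F₃ × F₄)).IsIndepSet ↑s ∧
      #s = ∑ t, #{v : Z* | supportPattern v.1 = (true, t)} := by
  refine ⟨({v | (supportPattern v.1).1} : Finset Z*), fun u hu v hv _ huv => ?_, ?_⟩
  · simp only [coe_filter, mem_univ, true_and, Set.mem_ofPred_eq, supportPattern_apply,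
      decide_eq_true_eq] at hu hv
    exact mul_ne_zero hu hv (congrArg Prod.fst huv.2)
  · rw [card_eq_sum_card_filter_add_card_filter _ (supportPattern ·.1) compl_involutive]
    refine sum_congr rfl fun t _ => ?_
    rw [filter_filter, filter_filter, add_eq_left.2 <| card_eq_zero.2 <|
      filter_false_of_mem fun v _ ⟨h₁, h₂⟩ => by simp [h₂] at h₁]
    exact congrArg card <| filter_congr fun v _ => and_iff_right_of_imp fun h => by rw [h]

theorem indepNum_eq_sum_card_filter_supportPattern_true (hbig : n₂ * n₃ * n₄ ≤ n₁) :
    indepNum (zdvGraph (F₁ × F₂ × F₃ × F₄)) =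
      ∑ t, #{v : Z* | supportPattern v.1 = (true, t)} :=
  indepNum_eq_of_isIndepSet exists_isIndepSet_card_eq fun _ hs => card_le_of_isIndepSet hbig hs

theorem sum_card_filter_supportPattern_true :
    ∑ t, #{v : Z* | supportPattern v.1 = (true, t)} =
      n₁ * (n₂ * n₃ + n₂ * n₄ + n₃ * n₄ + n₂ + n₃ + n₄ + 1) := by
  simp only [Fintype.sum_prod_type, Fintype.sum_bool, filter_supportPattern_all_true_eq_empty,
    card_empty]
  simp (disch := decide) only [card_filter_supportPattern_eq]
  simp only [card_supportPattern_eq, cond_true, cond_false]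
  ring

end FourFieldProduct

theorem stmt10_general (F₁ F₂ F₃ F₄ : Type*) [Field F₁] [Field F₂] [Field F₃] [Field F₄]
    [Finite F₁] [Finite F₂] [Finite F₃] [Finite F₄] (n₁ n₂ n₃ n₄ : ℕ)
    (h₁ : Nat.card {x : F₁ // x ≠ 0} = n₁) (h₂ : Nat.card {x : F₂ // x ≠ 0} = n₂)
    (h₃ : Nat.card {x : F₃ // x ≠ 0} = n₃) (h₄ : Nat.card {x : F₄ // x ≠ 0} = n₄)
    (hbig : n₂ * n₃ * n₄ ≤ n₁) :
    indepNum (zdvGraph (F₁ × F₂ × F₃ × F₄)) =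
      n₁ * (n₂ * n₃ + n₂ * n₄ + n₃ * n₄ + n₂ + n₃ + n₄ + 1) := by
  classical
  cases nonempty_fintype F₁
  cases nonempty_fintype F₂
  cases nonempty_fintype F₃
  cases nonempty_fintype F₄
  subst h₁ h₂ h₃ h₄
  rw [FourFieldProduct.indepNum_eq_sum_card_filter_supportPattern_true hbig,
    FourFieldProduct.sum_card_filter_supportPattern_true]

theorem stmt10 (F₁ F₂ F₃ F₄ : Type*) [Field F₁] [Field F₂] [Field F₃] [Field F₄]
    [Finite F₁] [Finite F₂] [Finite F₃] [Finite F₄] (n₁ n₂ n₃ n₄ : ℕ)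
    (h₁ : Nat.card {x : F₁ // x ≠ 0} = n₁) (h₂ : Nat.card {x : F₂ // x ≠ 0} = n₂)
    (h₃ : Nat.card {x : F₃ // x ≠ 0} = n₃) (h₄ : Nat.card {x : F₄ // x ≠ 0} = n₄)
    (h12 : n₂ ≤ n₁) (h23 : n₃ ≤ n₂) (h34 : n₄ ≤ n₃)
    (hbig : n₂ * n₃ * n₄ ≤ n₁) :
    indepNum (zdvGraph (F₁ × F₂ × F₃ × F₄)) =
      n₁ * (n₂ * n₃ + n₂ * n₄ + n₃ * n₄ + n₂ + n₃ + n₄ + 1) :=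
  stmt10_general F₁ F₂ F₃ F₄ n₁ n₂ n₃ n₄ h₁ h₂ h₃ h₄ hbig
end

section
/- Let F1, F2, F3, F4 be finite fields with |F_i \ {0}| = n_i for i = 1, 2, 3, 4, where n1 ≥ n2 ≥ n3 ≥ n4, and let R = F1 × F2 × F3 × F4. If n1 ≤ n2·n3·n4 and n1·n4 ≥ n2·n3, then α(Γ(R)) = n1·(n2n3 + n2n4 + n3n4 + n2 + n3 + n4) + n2·n3·n4. -/
/-!
An element `x` of a product of domains `R₁ × ⋯ × R_k` has a support `supp x ⊆ {1, …, k}`, the set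
of its nonzero coordinates, with `supp (x * y) = supp x ∩ supp y`. Hence `x * y = 0` iff the
supports are disjoint, the vertices of `Γ(R)` are the elements of proper nonempty support, and
an independent set has an intersecting family of supports. Conversely, all elements whose
support lies in a given intersecting family form an independent set. So `α(Γ(R))` is the maximum,
over intersecting families `𝒜` not containing the full index set, of `∑_{S ∈ 𝒜} ∏_{i ∈ S} nᵢ`.

Such a family contains at most one of `S` and `Sᶜ`. For four factors the hypotheses on the `nᵢ`
say exactly that in each complementary pair the heavier set is the one in the family
`{234, 134, 124, 123, 12, 13, 14}`, which is itself intersecting and attains the bound.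
-/

open Finset

theorem indepNum_eq_of_forall_card_le {V : Type*} {G : SimpleGraph V} {N : ℕ}
    (hle : ∀ s : Finset V, (s : Set V).Pairwise (fun a b => ¬ G.Adj a b) → s.card ≤ N)
    (hex : ∃ s : Finset V, (s : Set V).Pairwise (fun a b => ¬ G.Adj a b) ∧ s.card = N) :
    indepNum G = N := by
  have hbdd : BddAbove
      {n | ∃ s : Finset V, (s : Set V).Pairwise (fun a b => ¬ G.Adj a b) ∧ s.card = n} :=
    ⟨N, by rintro n ⟨s, hs, rfl⟩; exact hle s hs⟩
  exact le_antisymm (csSup_le ⟨N, hex⟩ (by rintro n ⟨s, hs, rfl⟩; exact hle s hs))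
    (le_csSup hbdd hex)

theorem Finset.card_le_sum_natCard_fiber {α β : Type*} [Finite α] [DecidableEq β] {P : α → Prop}
    (g : α → β) (s : Finset (Subtype P)) :
    s.card ≤ ∑ b ∈ s.image (fun v => g v.1), Nat.card {x // g x = b} := by
  rw [card_eq_sum_card_image (fun v => g v.1) s]
  refine sum_le_sum fun b _ => ?_
  rw [← Nat.card_eq_finsetCard]
  exact Nat.card_le_card_of_injective (fun v => ⟨v.1.1, (mem_filter.mp v.2).2⟩)
    fun u v huv => Subtype.ext (Subtype.ext (Subtype.mk.inj huv))

theorem Set.Intersecting.sum_le_sum_of_covers {α : Type*} [BooleanAlgebra α] [DecidableEq α]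
    {w : α → ℕ} {𝒜 𝒜₀ : Finset α} (h𝒜 : (𝒜 : Set α).Intersecting) (htop : ⊤ ∉ 𝒜)
    (hcover : ∀ a, a ≠ ⊥ → a ≠ ⊤ → a ∈ 𝒜₀ ∨ aᶜ ∈ 𝒜₀) (hw : ∀ a ∈ 𝒜₀, w aᶜ ≤ w a) :
    ∑ a ∈ 𝒜, w a ≤ ∑ a ∈ 𝒜₀, w a := by
  set φ : α → α := fun a => if a ∈ 𝒜₀ then a else aᶜ
  have hφ_mem : ∀ a ∈ 𝒜, φ a ∈ 𝒜₀ := by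
    intro a ha
    rcases hcover a (h𝒜.ne_bot ha) (ne_of_mem_of_not_mem ha htop) with h | h <;>
      simp only [φ] <;> split_ifs <;> assumption
  have hφ_inj : Set.InjOn φ 𝒜 := by
    intro a ha b hb hab
    by_cases ha₀ : a ∈ 𝒜₀ <;> by_cases hb₀ : b ∈ 𝒜₀ <;>
      simp only [φ, ha₀, hb₀, if_true, if_false] at hab
    · exact hab
    · exact absurd (hab ▸ ha) (h𝒜.compl_notMem hb)
    · exact absurd (hab ▸ hb) (h𝒜.compl_notMem ha)
    · exact compl_injective hab
  have hφ_le : ∀ a ∈ 𝒜, w a ≤ w (φ a) := by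
    intro a ha
    by_cases ha₀ : a ∈ 𝒜₀
    · simp [φ, ha₀]
    · have hc := (hcover a (h𝒜.ne_bot ha) (ne_of_mem_of_not_mem ha htop)).resolve_left ha₀
      simpa [φ, ha₀] using hw _ hc
  calc ∑ a ∈ 𝒜, w a ≤ ∑ a ∈ 𝒜, w (φ a) := sum_le_sum hφ_le
    _ = ∑ a ∈ 𝒜.image φ, w a := (sum_image hφ_inj).symm
    _ ≤ ∑ a ∈ 𝒜₀, w a := sum_le_sum_of_subset (Finset.image_subset_iff.mpr hφ_mem)

structure IsSupportMap {R ι : Type*} [CommRing R] [DecidableEq ι] (supp : R → Finset ι) :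
    Prop where
  map_mul : ∀ x y, supp (x * y) = supp x ∩ supp y
  eq_empty_iff : ∀ x, supp x = ∅ ↔ x = 0
  surjective : Function.Surjective supp

namespace IsSupportMap

variable {R ι : Type*} [CommRing R] [DecidableEq ι] {supp : R → Finset ι}

theorem mul_eq_zero_iff (h : IsSupportMap supp) {x y : R} :
    x * y = 0 ↔ Disjoint (supp x) (supp y) := by
  rw [← h.eq_empty_iff, h.map_mul, disjoint_iff_inter_eq_empty]

variable [Fintype ι]

theorem ne_zero_and_exists_mul_eq_zero_iff (h : IsSupportMap supp) {x : R} :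
    (x ≠ 0 ∧ ∃ y ≠ 0, x * y = 0) ↔ supp x ≠ ∅ ∧ supp x ≠ univ := by
  rw [Ne, ← h.eq_empty_iff x]
  refine and_congr_right fun _ => ⟨?_, fun hx => ?_⟩
  · rintro ⟨y, hy, hxy⟩ hx
    rw [h.mul_eq_zero_iff, hx, ← top_eq_univ, top_disjoint] at hxy
    exact hy ((h.eq_empty_iff y).mp hxy)
  · obtain ⟨y, hy⟩ := h.surjective (supp x)ᶜ
    refine ⟨y, ?_, ?_⟩
    · rwa [Ne, ← h.eq_empty_iff y, hy, compl_eq_empty_iff]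
    · rw [h.mul_eq_zero_iff, hy]
      exact disjoint_compl_right

theorem intersecting_image_of_pairwise_not_adj (h : IsSupportMap supp)
    {s : Finset {x : R // x ≠ 0 ∧ ∃ y ≠ 0, x * y = 0}}
    (hs : (s : Set _).Pairwise (fun a b => ¬ (zdvGraph R).Adj a b)) :
    ((s.image fun v => supp v.1 : Finset (Finset ι)) : Set (Finset ι)).Intersecting := by
  simp only [coe_image]
  rintro _ ⟨u, hu, rfl⟩ _ ⟨v, hv, rfl⟩ huv
  by_cases heq : u = v
  · subst heq
    exact (h.ne_zero_and_exists_mul_eq_zero_iff.mp u.2).1 (disjoint_self.mp huv)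
  · exact hs hu hv heq ⟨heq, h.mul_eq_zero_iff.mpr huv⟩

variable [Finite R]

theorem exists_pairwise_not_adj_card_eq (h : IsSupportMap supp) {𝒜 : Finset (Finset ι)}
    (h𝒜 : (𝒜 : Set (Finset ι)).Intersecting) (huniv : univ ∉ 𝒜) :
    ∃ t : Finset {x : R // x ≠ 0 ∧ ∃ y ≠ 0, x * y = 0},
      (t : Set _).Pairwise (fun a b => ¬ (zdvGraph R).Adj a b) ∧
      t.card = ∑ S ∈ 𝒜, Nat.card {x // supp x = S} := by
  classical
  have := Fintype.ofFinite R
  have hzdv : ∀ x : R, supp x ∈ 𝒜 → x ≠ 0 ∧ ∃ y ≠ 0, x * y = 0 := fun x hx =>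
    h.ne_zero_and_exists_mul_eq_zero_iff.mpr ⟨h𝒜.ne_bot hx, ne_of_mem_of_not_mem hx huniv⟩
  refine ⟨(univ.filter fun x => supp x ∈ 𝒜).subtype _, ?_, ?_⟩
  · intro u hu v hv _ hadj
    simp only [mem_coe, mem_subtype, mem_filter, mem_univ, true_and] at hu hv
    exact h𝒜 hu hv (h.mul_eq_zero_iff.mp hadj.2)
  · rw [card_subtype, filter_true_of_mem fun x hx => hzdv x (mem_filter.mp hx).2,
      card_eq_sum_card_fiberwise (s := univ.filter fun x => supp x ∈ 𝒜) (t := 𝒜)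
        fun x hx => (mem_filter.mp hx).2]
    refine sum_congr rfl fun S hS => ?_
    rw [filter_filter, Nat.card_eq_fintype_card, Fintype.card_subtype]
    congr 1
    ext x
    simp only [mem_filter, mem_univ, true_and, and_iff_right_iff_imp]
    exact fun hx => hx ▸ hS

theorem indepNum_zdvGraph_eq (h : IsSupportMap supp) {N : ℕ}
    (hle : ∀ 𝒜 : Finset (Finset ι), (𝒜 : Set (Finset ι)).Intersecting → univ ∉ 𝒜 →
      ∑ S ∈ 𝒜, Nat.card {x // supp x = S} ≤ N)
    (hex : ∃ 𝒜 : Finset (Finset ι), (𝒜 : Set (Finset ι)).Intersecting ∧ univ ∉ 𝒜 ∧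
      ∑ S ∈ 𝒜, Nat.card {x // supp x = S} = N) :
    indepNum (zdvGraph R) = N := by
  refine indepNum_eq_of_forall_card_le (fun s hs => ?_) ?_
  · refine (s.card_le_sum_natCard_fiber supp).trans (hle _ ?_ ?_)
    · exact h.intersecting_image_of_pairwise_not_adj hs
    · simp only [mem_image, not_exists, not_and]
      exact fun v _ => (h.ne_zero_and_exists_mul_eq_zero_iff.mp v.2).2
  · obtain ⟨𝒜, h𝒜, huniv, rfl⟩ := hex
    exact h.exists_pairwise_not_adj_card_eq h𝒜 huniv

end IsSupportMap

theorem Finset.prod_fin_four_eq {M : Type*} [CommMonoid M] (f : Fin 4 → M) (S : Finset (Fin 4)) :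
    ∏ i ∈ S, f i = (if 0 ∈ S then f 0 else 1) * (if 1 ∈ S then f 1 else 1) *
      (if 2 ∈ S then f 2 else 1) * (if 3 ∈ S then f 3 else 1) := by
  rw [← Fintype.prod_ite_mem, Fin.prod_univ_four]

theorem natCard_subtype_prod₄ {α₁ α₂ α₃ α₄ : Type*} (q₁ : α₁ → Prop) (q₂ : α₂ → Prop)
    (q₃ : α₃ → Prop) (q₄ : α₄ → Prop) :
    Nat.card {x : α₁ × α₂ × α₃ × α₄ // q₁ x.1 ∧ q₂ x.2.1 ∧ q₃ x.2.2.1 ∧ q₄ x.2.2.2} =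
      Nat.card {a // q₁ a} *
        (Nat.card {a // q₂ a} * (Nat.card {a // q₃ a} * Nat.card {a // q₄ a})) := by
  rw [← Nat.card_prod, ← Nat.card_prod, ← Nat.card_prod]
  exact Nat.card_congr <| Equiv.subtypeProdEquivProd.trans <| (Equiv.refl _).prodCongr <|
    Equiv.subtypeProdEquivProd.trans <| (Equiv.refl _).prodCongr Equiv.subtypeProdEquivProd

theorem natCard_subtype_ne_zero_iff {F : Type*} [Zero F] (p : Prop) [Decidable p] :
    Nat.card {a : F // a ≠ 0 ↔ p} = if p then Nat.card {a : F // a ≠ 0} else 1 := by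
  by_cases hp : p <;> simp [hp]

section Support₄

variable {F₁ F₂ F₃ F₄ : Type*}

-- The factor `Fᵢ` has index `i - 1 : Fin 4`.
open Classical in
noncomputable def support₄ [Zero F₁] [Zero F₂] [Zero F₃] [Zero F₄] (x : F₁ × F₂ × F₃ × F₄) :
    Finset (Fin 4) :=
  {i | ![x.1 ≠ 0, x.2.1 ≠ 0, x.2.2.1 ≠ 0, x.2.2.2 ≠ 0] i}

theorem support₄_eq_iff [Zero F₁] [Zero F₂] [Zero F₃] [Zero F₄] (x : F₁ × F₂ × F₃ × F₄)
    (S : Finset (Fin 4)) :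
    support₄ x = S ↔ (x.1 ≠ 0 ↔ 0 ∈ S) ∧ (x.2.1 ≠ 0 ↔ 1 ∈ S) ∧ (x.2.2.1 ≠ 0 ↔ 2 ∈ S) ∧
      (x.2.2.2 ≠ 0 ↔ 3 ∈ S) := by
  simp [support₄, Finset.ext_iff, Fin.forall_fin_succ]

theorem isSupportMap_support₄ [CommRing F₁] [CommRing F₂] [CommRing F₃] [CommRing F₄]
    [IsDomain F₁] [IsDomain F₂] [IsDomain F₃] [IsDomain F₄] :
    IsSupportMap (support₄ : F₁ × F₂ × F₃ × F₄ → Finset (Fin 4)) where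
  map_mul x y := by ext i; fin_cases i <;> simp [support₄]
  eq_empty_iff x := by simp [support₄_eq_iff, Prod.ext_iff]
  surjective S := ⟨(if 0 ∈ S then 1 else 0, if 1 ∈ S then 1 else 0, if 2 ∈ S then 1 else 0,
    if 3 ∈ S then 1 else 0), by simp [support₄_eq_iff]⟩

theorem natCard_support₄_eq [Zero F₁] [Zero F₂] [Zero F₃] [Zero F₄] (S : Finset (Fin 4)) :
    Nat.card {x : F₁ × F₂ × F₃ × F₄ // support₄ x = S} =
      ∏ i ∈ S, ![Nat.card {a : F₁ // a ≠ 0}, Nat.card {a : F₂ // a ≠ 0},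
        Nat.card {a : F₃ // a ≠ 0}, Nat.card {a : F₄ // a ≠ 0}] i := by
  classical
  rw [Nat.card_congr (Equiv.subtypeEquivRight fun x => support₄_eq_iff x S),
    natCard_subtype_prod₄ (fun a : F₁ => a ≠ 0 ↔ 0 ∈ S) (fun a : F₂ => a ≠ 0 ↔ 1 ∈ S)
      (fun a : F₃ => a ≠ 0 ↔ 2 ∈ S) (fun a : F₄ => a ≠ 0 ↔ 3 ∈ S),
    natCard_subtype_ne_zero_iff, natCard_subtype_ne_zero_iff, natCard_subtype_ne_zero_iff,
    natCard_subtype_ne_zero_iff,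
    prod_fin_four_eq]
  simp [mul_assoc]

end Support₄

def maxIntersectingFamily : Finset (Finset (Fin 4)) :=
  {{1, 2, 3}, {0, 2, 3}, {0, 1, 3}, {0, 1, 2}, {0, 1}, {0, 2}, {0, 3}}

theorem intersecting_maxIntersectingFamily :
    (maxIntersectingFamily : Set (Finset (Fin 4))).Intersecting := by
  simp only [Set.Intersecting, mem_coe]
  decide

theorem univ_notMem_maxIntersectingFamily : univ ∉ maxIntersectingFamily := by decide

theorem mem_maxIntersectingFamily_or_compl_mem :
    ∀ S : Finset (Fin 4), S ≠ ∅ → S ≠ univ →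
      S ∈ maxIntersectingFamily ∨ Sᶜ ∈ maxIntersectingFamily := by
  decide

theorem prod_compl_le_prod_of_mem_maxIntersectingFamily {n₁ n₂ n₃ n₄ : ℕ} (hn₄ : 0 < n₄)
    (h12 : n₂ ≤ n₁) (h23 : n₃ ≤ n₂) (h34 : n₄ ≤ n₃)
    (hle : n₁ ≤ n₂ * n₃ * n₄) (hge : n₂ * n₃ ≤ n₁ * n₄) :
    ∀ S ∈ maxIntersectingFamily,
      ∏ i ∈ Sᶜ, ![n₁, n₂, n₃, n₄] i ≤ ∏ i ∈ S, ![n₁, n₂, n₃, n₄] i := by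
  simp only [maxIntersectingFamily, mem_insert, mem_singleton]
  rintro S (rfl | rfl | rfl | rfl | rfl | rfl | rfl) <;>
    simp +decide [prod_fin_four_eq] <;>
    nlinarith [Nat.mul_le_mul h12 h34, Nat.mul_le_mul h23 h34, Nat.mul_le_mul h12 h23]

theorem sum_prod_maxIntersectingFamily (n₁ n₂ n₃ n₄ : ℕ) :
    ∑ S ∈ maxIntersectingFamily, ∏ i ∈ S, ![n₁, n₂, n₃, n₄] i =
      n₁ * (n₂ * n₃ + n₂ * n₄ + n₃ * n₄ + n₂ + n₃ + n₄) + n₂ * n₃ * n₄ := by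
  simp +decide [maxIntersectingFamily]
  ring

theorem stmt11 (F₁ F₂ F₃ F₄ : Type*) [Field F₁] [Field F₂] [Field F₃] [Field F₄]
    [Finite F₁] [Finite F₂] [Finite F₃] [Finite F₄] (n₁ n₂ n₃ n₄ : ℕ)
    (h₁ : Nat.card {x : F₁ // x ≠ 0} = n₁) (h₂ : Nat.card {x : F₂ // x ≠ 0} = n₂)
    (h₃ : Nat.card {x : F₃ // x ≠ 0} = n₃) (h₄ : Nat.card {x : F₄ // x ≠ 0} = n₄)
    (h12 : n₂ ≤ n₁) (h23 : n₃ ≤ n₂) (h34 : n₄ ≤ n₃)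
    (hle : n₁ ≤ n₂ * n₃ * n₄) (hge : n₂ * n₃ ≤ n₁ * n₄) :
    indepNum (zdvGraph (F₁ × F₂ × F₃ × F₄)) =
      n₁ * (n₂ * n₃ + n₂ * n₄ + n₃ * n₄ + n₂ + n₃ + n₄) + n₂ * n₃ * n₄ := by
  have : Nonempty {x : F₄ // x ≠ 0} := ⟨⟨1, one_ne_zero⟩⟩
  have hn₄ : 0 < n₄ := h₄ ▸ Nat.card_pos
  have hcard (S : Finset (Fin 4)) :
      Nat.card {x : F₁ × F₂ × F₃ × F₄ // support₄ x = S} = ∏ i ∈ S, ![n₁, n₂, n₃, n₄] i := by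
    rw [natCard_support₄_eq, h₁, h₂, h₃, h₄]
  rw [← sum_prod_maxIntersectingFamily]
  refine isSupportMap_support₄.indepNum_zdvGraph_eq (fun 𝒜 h𝒜 huniv => ?_)
    ⟨maxIntersectingFamily, intersecting_maxIntersectingFamily,
      univ_notMem_maxIntersectingFamily, by simp only [hcard]⟩
  simp only [hcard]
  exact h𝒜.sum_le_sum_of_covers huniv mem_maxIntersectingFamily_or_compl_mem
    (prod_compl_le_prod_of_mem_maxIntersectingFamily hn₄ h12 h23 h34 hle hge)
end
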